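/- Let ρ be a density operator on the n-qubit Hilbert space, |φ⟩ ∈ H a unit vector, O = |φ⟩⟨φ| − 𝟙/d, and F = ⟨φ|ρ|φ⟩. Then Ξ̃_{ρ,O}·Ξ_{ρ,O} = Ξ̃_{ρ,φ}·Ξ_{ρ,φ} − 2F + 1/d ≤ ‖Ξ_{ρ,O}‖₂² = ‖Ξ_{ρ,φ}‖₂² − 1 < ‖Ξ_φ²‖_{[d]}, where Ξ_{ρ,φ} and Ξ̃_{ρ,φ} denote the (twisted) cross characteristic functions of (ρ, |φ⟩⟨φ|). Moreover, for ρ = |φ⟩⟨φ| one has Ξ̃_{φ,φ}·Ξ_{φ,φ} = ‖Ξ_{φ,φ}‖₂² = 2^{−M₂(φ)}·d. -/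

import Mathlib

open MeasureTheory Matrix
open scoped BigOperators ENNReal Real ComplexConjugate ComplexOrder

noncomputable section

namespace ThriftyShadow

/-- basis index set of the `n`-qubit Hilbert space -/
abbrev Idx (n : ℕ) := Fin n → Fin 2

/-- linear operators on the `n`-qubit Hilbert space -/
abbrev Op (n : ℕ) := Matrix (Idx n) (Idx n) ℂ

/-- index set for the `t`-th tensor power -/
abbrev TIdx (n t : ℕ) := Fin t → Idx n

/-- operators on the `t`-th tensor power -/
abbrev TMat (n t : ℕ) := Matrix (TIdx n t) (TIdx n t) ℂ

/-- the dimension `d = 2^n`, as a real number -/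
def dim (n : ℕ) : ℝ := 2 ^ n

/-- tensor product of a family of operators: `(⨂ i, f i) (x,y) = ∏ i, (f i) (x i) (y i)` -/
def tpow {n t : ℕ} (f : Fin t → Op n) : TMat n t :=
  Matrix.of fun x y => ∏ i, f i (x i) (y i)

/-- the projector `|b⟩⟨b|` onto a computational basis state -/
def ket (n : ℕ) (b : Idx n) : Op n := Matrix.single b b 1

/-- `|φ⟩⟨φ|` for a vector `φ` -/
def ketbra {n : ℕ} (φ : Idx n → ℂ) : Op n := Matrix.vecMulVec φ (star φ)

/-- a density operator: positive semidefinite with unit trace -/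
def IsDensity {n : ℕ} (ρ : Op n) : Prop := ρ.PosSemidef ∧ ρ.trace = 1

/-- squared Hilbert–Schmidt norm `tr(O²)` of a Hermitian operator -/
def hsNormSq {n : ℕ} (O : Op n) : ℝ := ((O * O).trace).re

/-- purity `tr(ρ²)` -/
def purity {n : ℕ} (ρ : Op n) : ℝ := ((ρ * ρ).trace).re

/-- fidelity `⟨φ|ρ|φ⟩` -/
def fid {n : ℕ} (ρ : Op n) (φ : Idx n → ℂ) : ℝ := (star φ ⬝ᵥ ρ.mulVec φ).re

/-- the unitary group `U(d)` on the `n`-qubit Hilbert space -/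
abbrev UG (n : ℕ) := Matrix.unitaryGroup (Idx n) ℂ

instance (n : ℕ) : MeasurableSpace (UG n) := borel _

/-- entries of the `t`-fold twirl `E_{U∼μ}[U^{⊗t} A (U†)^{⊗t}]` -/
def twirlEntry {n t : ℕ} (μ : Measure (UG n)) (A : TMat n t) (i j : TIdx n t) : ℂ :=
  ∫ U : UG n,
    (((tpow fun _ => (U : Op n)) * A * (tpow fun _ => (U : Op n)ᴴ) : TMat n t)) i j ∂μ

/-- `ν` is the Haar probability measure on `U(d)`: the (unique) left-invariant
Borel probability measure -/
def IsHaar {n : ℕ} (ν : Measure (UG n)) : Prop :=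
  IsProbabilityMeasure ν ∧ ∀ V : UG n, Measure.map (fun U => V * U) ν = ν

/-- `μ` is a unitary `t`-design: its `t`-fold twirl agrees with that of the
Haar measure `ν` -/
def IsTDesign {n : ℕ} (t : ℕ) (μ ν : Measure (UG n)) : Prop :=
  ∀ A : TMat n t, ∀ i j, twirlEntry μ A i j = twirlEntry ν A i j

/-- the single-shot shadow-estimation variance `V(O,ρ)` of a unitary 2-design `μ` -/
def Vshadow {n : ℕ} (μ : Measure (UG n)) (O ρ : Op n) : ℝ :=
  ((∫ U : UG n, ∑ b : Idx n, (((dim n + 1 : ℝ) : ℂ))^2 *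
      ((tpow fun _ : Fin 3 => (U : Op n)ᴴ * ket n b * (U : Op n)) * tpow ![ρ, O, O]).trace ∂μ)
    - ((O * ρ).trace)^2).re

/-- the cross moment operator `Ω` of a unitary ensemble given by a measure `ω` on a
parameter space together with a (unitary-valued) map `f` into operators -/
def Omega {n : ℕ} {α : Type*} [MeasurableSpace α] (ω : Measure α) (f : α → Op n) : TMat n 4 :=
  Matrix.of fun i j =>
    ∑ a : Idx n, ∑ b : Idx n,
      ∫ x, (((tpow fun _ => (f x)ᴴ) * (tpow ![ket n a, ket n a, ket n b, ket n b])
              * (tpow fun _ => f x) : TMat n 4)) i j ∂ω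

/-- the reuse variance `V*(O,ρ)` of the unitary ensemble `(ω, f)` -/
def Vstar {n : ℕ} {α : Type*} [MeasurableSpace α] (ω : Measure α) (f : α → Op n)
    (O ρ : Op n) : ℝ :=
  ((((dim n + 1 : ℝ) : ℂ))^2 * (Omega ω f * tpow ![O, ρ, O, ρ]).trace
    - ((O * ρ).trace)^2).re

/-- `V*(O,ρ)` for an ensemble which is simply a measure on the unitary group -/
def VstarU {n : ℕ} (μ : Measure (UG n)) (O ρ : Op n) : ℝ :=
  Vstar μ (fun U => (U : Op n)) O ρ

/-- `V*(O) = sup_ρ V*(O,ρ)`, supremum over density operators -/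
def VstarSup {n : ℕ} {α : Type*} [MeasurableSpace α] (ω : Measure α) (f : α → Op n)
    (O : Op n) : ℝ :=
  sSup {v | ∃ ρ : Op n, IsDensity ρ ∧ v = Vstar ω f O ρ}

/-- the single-qubit Pauli matrices `I, X, Y, Z` -/
def pauli1 : Fin 4 → Matrix (Fin 2) (Fin 2) ℂ :=
  ![1, !![0, 1; 1, 0], !![0, -Complex.I; Complex.I, 0], !![1, 0; 0, -1]]

/-- index set for `n`-qubit Pauli operators -/
abbrev PIdx (n : ℕ) := Fin n → Fin 4

/-- the `n`-qubit Pauli operator labelled by `p` -/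
def pauliOp (n : ℕ) (p : PIdx n) : Op n :=
  Matrix.of fun x y => ∏ i, pauli1 (p i) (x i) (y i)

/-- the `n`-qubit Pauli group (Pauli operators with phases `i^k`) -/
def pauliGroup (n : ℕ) : Set (Op n) :=
  {A | ∃ (k : Fin 4) (p : PIdx n), A = Complex.I ^ (k : ℕ) • pauliOp n p}

/-- the Clifford group, as the set of unitaries normalizing the Pauli group -/
def cliffordSet (n : ℕ) : Set (UG n) :=
  {U | (fun A => (U : Op n) * A * (U : Op n)ᴴ) '' pauliGroup n = pauliGroup n}

/-- `μ` is the Haar probability measure of the Clifford group, viewed as a measure on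
`U(d)`: it is supported on the Clifford group and left-invariant under it -/
def IsCliffordHaar {n : ℕ} (μ : Measure (UG n)) : Prop :=
  μ (cliffordSet n) = 1 ∧ ∀ C ∈ cliffordSet n, Measure.map (fun U => C * U) μ = μ

/-- characteristic function `Ξ_A(P) = tr(A P)` (real part) -/
def XiC {n : ℕ} (A : Op n) (p : PIdx n) : ℝ := ((A * pauliOp n p).trace).re

/-- cross characteristic function `Ξ_{ρ,O}(P) = tr(ρP) tr(OP)` -/
def crossXi {n : ℕ} (ρ O : Op n) (p : PIdx n) : ℝ := XiC ρ p * XiC O p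

/-- twisted cross characteristic function `Ξ̃_{ρ,O}(P) = tr(ρ P O P)` -/
def twistXi {n : ℕ} (ρ O : Op n) (p : PIdx n) : ℝ :=
  ((ρ * pauliOp n p * O * pauliOp n p).trace).re

/-- the quantity `V_△(O,ρ)` -/
def Vtri {n : ℕ} (O ρ : Op n) : ℝ :=
  (dim n + 1) / (dim n * (dim n + 2)) *
    ((∑ p : PIdx n, (crossXi ρ O p)^2) + ∑ p : PIdx n, twistXi ρ O p * crossXi ρ O p)

/-- `V_△(O) = sup_ρ V_△(O,ρ)` over density operators -/
def VtriSup {n : ℕ} (O : Op n) : ℝ :=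
  sSup {v | ∃ ρ : Op n, IsDensity ρ ∧ v = Vtri O ρ}

/-- the sum of the `d` largest entries of a vector indexed by Pauli labels -/
def topdSum {n : ℕ} (g : PIdx n → ℝ) : ℝ :=
  sSup {x | ∃ S : Finset (PIdx n), S.card = 2 ^ n ∧ x = ∑ p ∈ S, g p}

/-- Pauli expectation value `⟨φ|P|φ⟩` of a pure state -/
def pExp {n : ℕ} (φ : Idx n → ℂ) (p : PIdx n) : ℝ :=
  (star φ ⬝ᵥ (pauliOp n p).mulVec φ).re

/-- stabilizer 2-Rényi entropy `M₂(φ)` of a pure state -/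
def M2 {n : ℕ} (φ : Idx n → ℂ) : ℝ :=
  - Real.logb 2 ((dim n)⁻¹ * ∑ p : PIdx n, (pExp φ p)^4)

/-- stabilizer 2-Rényi entropy `M̃₂(ρ)` of a (mixed) state -/
def M2mixed {n : ℕ} (ρ : Op n) : ℝ :=
  - Real.logb 2 ((∑ p : PIdx n, (XiC ρ p)^4) / (dim n * purity ρ))

/-- the T gate -/
def Tgate : Matrix (Fin 2) (Fin 2) ℂ :=
  !![1, 0; 0, Complex.exp (Complex.I * (Real.pi / 4))]

/-- the Hadamard gate -/
def Hgate : Matrix (Fin 2) (Fin 2) ℂ :=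
  ((Real.sqrt 2 : ℂ))⁻¹ • !![1, 1; 1, -1]

/-- a single-qubit gate `A` applied in parallel to the last `k` qubits -/
def layer (n k : ℕ) (A : Matrix (Fin 2) (Fin 2) ℂ) : Op n :=
  Matrix.of fun x y =>
    ∏ i : Fin n, (if (i : ℕ) < n - k then (1 : Matrix (Fin 2) (Fin 2) ℂ) else A) (x i) (y i)

/-- the interleaved Clifford–T circuit `U_l T̂_k U_{l-1} T̂_k ⋯ T̂_k U_0` -/
def circuit (n k : ℕ) : (l : ℕ) → (Fin (l + 1) → UG n) → Op n
  | 0 => fun Us => (Us 0 : Op n)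
  | (l + 1) => fun Us =>
      (Us (Fin.last (l + 1)) : Op n) * layer n k Tgate * circuit n k l (fun i => Us i.castSucc)

/-- the computational basis state `|0…0⟩` as a vector -/
def e0 (n : ℕ) : Idx n → ℂ := fun b => if b = (fun _ => (0 : Fin 2)) then 1 else 0

end ThriftyShadow

open ThriftyShadow

/-!
Expanding in the Pauli basis, `∑_P tr(BP) P = d B`, gives `∑_P tr(AP) tr(BP) = d tr(AB)`
and, since `PQP = ±Q`, `d Ξ̃_{A,B}(P) = ∑_Q ±Ξ_{A,B}(Q)`. The `±1` sign matrix has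
orthogonal columns of squared length `d²`, so `‖Ξ̃_{ρ,O}‖₂ = ‖Ξ_{ρ,O}‖₂` and Cauchy–Schwarz
gives the inequality. Passing from `|φ⟩⟨φ|` to `O` changes `Ξ` only at `P = 𝟙` and shifts
`Ξ̃` by `-1/d`, which gives the two identities. The weights `tr(ρP)²` lie in `[0, 1]` and
add up to `d tr ρ² ≤ d`, so `‖Ξ_{ρ,φ}‖₂² = ∑_P tr(ρP)² ⟨φ|P|φ⟩²` is at most the sum of the
`d` largest `⟨φ|P|φ⟩²`. Finally `|φ⟩⟨φ| P |φ⟩⟨φ| = ⟨φ|P|φ⟩ |φ⟩⟨φ|` makes `Ξ̃_{φ,φ} = Ξ_{φ,φ}`.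
-/

namespace Matrix

section PiKron

variable {κ ι R : Type*} [Fintype κ] [CommSemiring R]

def piKron (f : κ → Matrix ι ι R) : Matrix (κ → ι) (κ → ι) R :=
  Matrix.of fun x y => ∏ k, f k (x k) (y k)

@[simp]
lemma piKron_apply (f : κ → Matrix ι ι R) (x y : κ → ι) :
    piKron f x y = ∏ k, f k (x k) (y k) := rfl

lemma piKron_mul [DecidableEq κ] [Fintype ι] (f g : κ → Matrix ι ι R) :
    piKron f * piKron g = piKron fun k => f k * g k := by
  ext x y
  simp only [mul_apply, piKron_apply, Fintype.prod_sum, Finset.prod_mul_distrib]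

lemma trace_piKron [DecidableEq κ] [Fintype ι] (f : κ → Matrix ι ι R) :
    (piKron f).trace = ∏ k, (f k).trace := by
  simp only [trace, diag_apply, piKron_apply, Fintype.prod_sum]

lemma piKron_one [DecidableEq ι] : piKron (fun _ : κ => (1 : Matrix ι ι R)) = 1 := by
  ext x y
  simp only [piKron_apply, one_apply, Fintype.prod_boole, funext_iff]

lemma piKron_smul (c : κ → R) (f : κ → Matrix ι ι R) :
    piKron (fun k => c k • f k) = (∏ k, c k) • piKron f := by
  ext x y
  simp only [piKron_apply, Matrix.smul_apply, smul_eq_mul, Finset.prod_mul_distrib]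

lemma conjTranspose_piKron [StarRing R] (f : κ → Matrix ι ι R) :
    (piKron f)ᴴ = piKron fun k => (f k)ᴴ := by
  ext x y
  simp only [conjTranspose_apply, piKron_apply, star_prod]

end PiKron

namespace PosSemidef

variable {m 𝕜 : Type*} [Fintype m] [DecidableEq m] [RCLike 𝕜] {A : Matrix m m 𝕜}

lemma abs_re_trace_mul_le (hA : A.PosSemidef) {U : Matrix m m 𝕜} (hU : U.IsHermitian)
    (hUU : U * U = 1) : |RCLike.re (A * U).trace| ≤ RCLike.re A.trace := by
  have key (B : Matrix m m 𝕜) (hB : B.IsHermitian) : 0 ≤ RCLike.re (A * (B * B)).trace := by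
    have h := (hA.mul_mul_conjTranspose_same B).trace_nonneg
    rw [hB.eq, trace_mul_cycle, trace_mul_comm] at h
    exact (RCLike.nonneg_iff.mp h).1
  have hplus := key (1 + U) (isHermitian_one.add hU)
  have hminus := key (1 - U) (isHermitian_one.sub hU)
  rw [show (1 + U) * (1 + U) = 2 • (1 + U) by
    rw [add_mul, mul_add, mul_add, hUU, one_mul, mul_one, one_mul]; abel] at hplus
  rw [show (1 - U) * (1 - U) = 2 • (1 - U) by
    rw [sub_mul, mul_sub, mul_sub, hUU, one_mul, mul_one, one_mul]; abel] at hminus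
  rw [Matrix.mul_smul, trace_smul, map_nsmul, mul_add, mul_one, trace_add, map_add,
    two_nsmul] at hplus
  rw [Matrix.mul_smul, trace_smul, map_nsmul, mul_sub, mul_one, trace_sub, map_sub,
    two_nsmul] at hminus
  exact abs_le.mpr ⟨by linarith, by linarith⟩

lemma re_trace_mul_self_le (hA : A.PosSemidef) :
    RCLike.re (A * A).trace ≤ RCLike.re A.trace ^ 2 := by
  have hsq : (A * A).trace = ∑ i, (hA.1.eigenvalues i : 𝕜) ^ 2 := by
    conv_lhs => rw [hA.1.spectral_theorem, ← map_mul, Unitary.conjStarAlgAut_apply,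
      trace_mul_cycle, Unitary.coe_star_mul_self, one_mul, diagonal_mul_diagonal, trace_diagonal]
    simp [sq]
  rw [hsq, hA.1.trace_eq_sum_eigenvalues]
  simp only [← RCLike.ofReal_pow, ← RCLike.ofReal_sum, RCLike.ofReal_re]
  exact Finset.sum_sq_le_sq_sum_of_nonneg fun i _ => hA.eigenvalues_nonneg i

end PosSemidef

end Matrix

lemma exists_card_eq_sum_mul_le_sum {ι : Type*} [Fintype ι] [DecidableEq ι] {w g : ι → ℝ}
    {k : ℕ} (hk : 0 < k) (hkι : k ≤ Fintype.card ι) (hw₀ : ∀ i, 0 ≤ w i) (hw₁ : ∀ i, w i ≤ 1)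
    (hw : ∑ i, w i ≤ k) (hg : ∀ i, 0 ≤ g i) :
    ∃ S : Finset ι, S.card = k ∧ ∑ i, w i * g i ≤ ∑ i ∈ S, g i := by
  obtain ⟨S, hS, hSmax⟩ := Finset.exists_max_image (Finset.univ.powersetCard k)
    (fun T => ∑ i ∈ T, g i) (Finset.powersetCard_nonempty.mpr (by simpa using hkι))
  have hScard : S.card = k := (Finset.mem_powersetCard.mp hS).2
  obtain ⟨i₀, hi₀, hmin⟩ := S.exists_min_image g (Finset.card_pos.mp (hScard ▸ hk))
  have hout (j : ι) (hj : j ∉ S) : g j ≤ g i₀ := by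
    have hj' : j ∉ S.erase i₀ := fun h => hj (Finset.mem_of_mem_erase h)
    have hT : insert j (S.erase i₀) ∈ Finset.univ.powersetCard k := by
      rw [Finset.mem_powersetCard, Finset.card_insert_of_notMem hj',
        Finset.card_erase_of_mem hi₀, hScard]
      exact ⟨Finset.subset_univ _, by omega⟩
    have h := hSmax _ hT
    rw [Finset.sum_insert hj', ← Finset.add_sum_erase S g hi₀] at h
    linarith
  refine ⟨S, hScard, ?_⟩
  calc ∑ i, w i * g i = ∑ i ∈ S, w i * g i + ∑ i ∈ Sᶜ, w i * g i :=
        (Finset.sum_add_sum_compl S _).symm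
    _ ≤ ∑ i ∈ S, w i * g i + (∑ i ∈ Sᶜ, w i) * g i₀ := by
        rw [Finset.sum_mul]
        gcongr with i hi
        · exact hw₀ i
        · exact hout i (Finset.mem_compl.mp hi)
    _ ≤ ∑ i ∈ S, w i * g i + (∑ i ∈ S, (1 - w i)) * g i₀ := by
        gcongr
        · exact hg i₀
        · rw [Finset.sum_sub_distrib, Finset.sum_const, hScard, nsmul_one]
          linarith [Finset.sum_add_sum_compl S w]
    _ ≤ ∑ i ∈ S, g i := by
        rw [Finset.sum_mul, ← Finset.sum_add_distrib]
        gcongr with i hi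
        nlinarith [hmin i hi, hw₁ i]

lemma sum_sq_sum_mul_of_orthogonal {ι : Type*} [Fintype ι] [DecidableEq ι] (s : ι → ι → ℝ)
    (c : ℝ) (hs : ∀ q q', ∑ p, s p q * s p q' = if q = q' then c else 0) (v : ι → ℝ) :
    ∑ p, (∑ q, s p q * v q) ^ 2 = c * ∑ q, v q ^ 2 := by
  calc ∑ p, (∑ q, s p q * v q) ^ 2 = ∑ q, ∑ q', v q * v q' * ∑ p, s p q * s p q' := by
        simp only [sq, Finset.sum_mul_sum]
        rw [Finset.sum_comm]
        refine Finset.sum_congr rfl fun q _ => ?_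
        rw [Finset.sum_comm]
        refine Finset.sum_congr rfl fun q' _ => ?_
        rw [Finset.mul_sum]
        exact Finset.sum_congr rfl fun p _ => by ring
    _ = c * ∑ q, v q ^ 2 := by
        simp [hs, Finset.mul_sum, sq, mul_comm]

namespace ThriftyShadow

lemma pauli1_mul_self (a : Fin 4) : pauli1 a * pauli1 a = 1 := by
  fin_cases a <;> ext x y <;> fin_cases x <;> fin_cases y <;>
    simp [pauli1, mul_apply, Fin.sum_univ_two, one_apply]

lemma pauli1_conjTranspose (a : Fin 4) : (pauli1 a)ᴴ = pauli1 a := by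
  fin_cases a <;> ext x y <;> fin_cases x <;> fin_cases y <;>
    simp [pauli1, conjTranspose_apply, one_apply]

lemma trace_pauli1 (a : Fin 4) : (pauli1 a).trace = if a = 0 then 2 else 0 := by
  fin_cases a <;> simp [pauli1, trace, Fin.sum_univ_two]

lemma sum_pauli1_apply_mul_apply (x y z w : Fin 2) :
    ∑ a, pauli1 a x y * pauli1 a z w = if x = w ∧ y = z then 2 else 0 := by
  fin_cases x <;> fin_cases y <;> fin_cases z <;> fin_cases w <;>
    simp [pauli1, Fin.sum_univ_four] <;> norm_num

def pauliSign1 (a b : Fin 4) : ℤ := if a = 0 ∨ b = 0 ∨ a = b then 1 else -1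

lemma pauli1_mul_mul_self (a b : Fin 4) :
    pauli1 a * pauli1 b * pauli1 a = (pauliSign1 a b : ℂ) • pauli1 b := by
  fin_cases a <;> fin_cases b <;> ext x y <;> fin_cases x <;> fin_cases y <;>
    simp [pauli1, pauliSign1, mul_apply, Fin.sum_univ_two]

lemma sum_pauliSign1_mul (b b' : Fin 4) :
    ∑ a, pauliSign1 a b * pauliSign1 a b' = if b = b' then 4 else 0 := by
  revert b b'; decide

variable {n : ℕ}

def pauliSign (p q : PIdx n) : ℤ := ∏ i, pauliSign1 (p i) (q i)

lemma pauliOp_eq_piKron (p : PIdx n) : pauliOp n p = piKron fun i => pauli1 (p i) := rfl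

lemma dim_pos : 0 < dim n := by
  unfold dim; positivity

lemma ofReal_dim : ((dim n : ℝ) : ℂ) = 2 ^ n := by
  simp [dim]

lemma pauliOp_zero : pauliOp n 0 = 1 :=
  piKron_one

lemma pauliOp_mul_self (p : PIdx n) : pauliOp n p * pauliOp n p = 1 := by
  simp only [pauliOp_eq_piKron, piKron_mul, pauli1_mul_self, piKron_one]

lemma isHermitian_pauliOp (p : PIdx n) : (pauliOp n p).IsHermitian := by
  simp only [IsHermitian, pauliOp_eq_piKron, conjTranspose_piKron, pauli1_conjTranspose]

lemma trace_pauliOp (p : PIdx n) :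
    (pauliOp n p).trace = if p = 0 then (dim n : ℂ) else 0 := by
  simp only [pauliOp_eq_piKron, trace_piKron, trace_pauli1, Fintype.prod_ite_zero,
    Finset.prod_const, Finset.card_univ, Fintype.card_fin, ofReal_dim, funext_iff, Pi.zero_apply]

lemma sum_pauliOp_apply_mul_apply (x y z w : Idx n) :
    ∑ p, pauliOp n p x y * pauliOp n p z w = if x = w ∧ y = z then (dim n : ℂ) else 0 := by
  simp only [pauliOp_eq_piKron, piKron_apply, ← Finset.prod_mul_distrib]
  rw [← Fintype.prod_sum (fun i a => pauli1 a (x i) (y i) * pauli1 a (z i) (w i))]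
  simp only [sum_pauli1_apply_mul_apply, Fintype.prod_ite_zero, Finset.prod_const,
    Finset.card_univ, Fintype.card_fin, ofReal_dim, funext_iff, forall_and]

lemma pauliOp_mul_mul_self (p q : PIdx n) :
    pauliOp n p * pauliOp n q * pauliOp n p = (pauliSign p q : ℂ) • pauliOp n q := by
  simp only [pauliOp_eq_piKron, piKron_mul, pauli1_mul_mul_self, piKron_smul, pauliSign,
    Int.cast_prod]

lemma sum_pauliSign_mul (q q' : PIdx n) :
    ∑ p, pauliSign p q * pauliSign p q' = if q = q' then 4 ^ n else 0 := by
  simp only [pauliSign, ← Finset.prod_mul_distrib]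
  rw [← Fintype.prod_sum (fun i a => pauliSign1 a (q i) * pauliSign1 a (q' i))]
  simp only [sum_pauliSign1_mul, Fintype.prod_ite_zero, Finset.prod_const,
    Finset.card_univ, Fintype.card_fin, funext_iff]

lemma sum_trace_mul_pauliOp_smul (B : Op n) :
    ∑ q, (B * pauliOp n q).trace • pauliOp n q = (dim n : ℂ) • B := by
  ext x y
  simp only [Matrix.sum_apply, Matrix.smul_apply, smul_eq_mul, trace, diag_apply, mul_apply,
    Finset.sum_mul]
  rw [Finset.sum_comm]
  simp only [Finset.sum_comm (γ := PIdx n), mul_assoc, ← Finset.mul_sum,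
    sum_pauliOp_apply_mul_apply, mul_ite, mul_zero]
  simp [ite_and, mul_comm]

lemma sum_trace_mul_pauliOp_mul (A B : Op n) :
    ∑ p, (A * pauliOp n p).trace * (B * pauliOp n p).trace = (dim n : ℂ) * (A * B).trace := by
  calc ∑ p, (A * pauliOp n p).trace * (B * pauliOp n p).trace
      = (A * ∑ p, (B * pauliOp n p).trace • pauliOp n p).trace := by
        simp only [Matrix.mul_sum, trace_sum, Matrix.mul_smul, trace_smul, smul_eq_mul, mul_comm]
    _ = (dim n : ℂ) * (A * B).trace := by
        rw [sum_trace_mul_pauliOp_smul, Matrix.mul_smul, trace_smul, smul_eq_mul]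

lemma dim_mul_trace_mul_pauliOp_mul_mul_pauliOp (A B : Op n) (p : PIdx n) :
    (dim n : ℂ) * (A * pauliOp n p * B * pauliOp n p).trace
      = ∑ q, (pauliSign p q : ℂ) * ((A * pauliOp n q).trace * (B * pauliOp n q).trace) := by
  calc (dim n : ℂ) * (A * pauliOp n p * B * pauliOp n p).trace
      = (A * pauliOp n p * ((dim n : ℂ) • B) * pauliOp n p).trace := by
        rw [Matrix.mul_smul, Matrix.smul_mul, trace_smul, smul_eq_mul]
    _ = ∑ q, (B * pauliOp n q).trace * (A * (pauliOp n p * pauliOp n q * pauliOp n p)).trace := by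
        simp only [← sum_trace_mul_pauliOp_smul, Matrix.mul_sum, Matrix.sum_mul, trace_sum,
          Matrix.mul_smul, Matrix.smul_mul, trace_smul, smul_eq_mul, Matrix.mul_assoc]
    _ = _ := by
        simp only [pauliOp_mul_mul_self, Matrix.mul_smul, trace_smul, smul_eq_mul]
        exact Finset.sum_congr rfl fun q _ => by ring

lemma ofReal_XiC {A : Op n} (hA : A.IsHermitian) (p : PIdx n) :
    (XiC A p : ℂ) = (A * pauliOp n p).trace := by
  have h : star (A * pauliOp n p).trace = (A * pauliOp n p).trace := by
    rw [← trace_conjTranspose, conjTranspose_mul, hA.eq, (isHermitian_pauliOp p).eq,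
      trace_mul_comm]
  exact Complex.conj_eq_iff_re.mp h

lemma ofReal_crossXi {A B : Op n} (hA : A.IsHermitian) (hB : B.IsHermitian) (p : PIdx n) :
    (crossXi A B p : ℂ) = (A * pauliOp n p).trace * (B * pauliOp n p).trace := by
  rw [crossXi, Complex.ofReal_mul, ofReal_XiC hA, ofReal_XiC hB]

lemma sum_crossXi {A B : Op n} (hA : A.IsHermitian) (hB : B.IsHermitian) :
    ∑ p, crossXi A B p = dim n * ((A * B).trace).re := by
  rw [← Complex.ofReal_re (∑ p, crossXi A B p), Complex.ofReal_sum]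
  simp only [ofReal_crossXi hA hB, sum_trace_mul_pauliOp_mul, Complex.re_ofReal_mul]

lemma twistXi_eq_sum {A B : Op n} (hA : A.IsHermitian) (hB : B.IsHermitian) (p : PIdx n) :
    twistXi A B p = (dim n)⁻¹ * ∑ q, (pauliSign p q : ℝ) * crossXi A B q := by
  have h := congrArg Complex.re (dim_mul_trace_mul_pauliOp_mul_mul_pauliOp A B p)
  simp only [← ofReal_crossXi hA hB, ← Complex.ofReal_intCast, ← Complex.ofReal_mul,
    ← Complex.ofReal_sum, Complex.re_ofReal_mul, Complex.ofReal_re] at h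
  rw [twistXi, ← h, inv_mul_cancel_left₀ dim_pos.ne']

lemma sum_sq_twistXi {A B : Op n} (hA : A.IsHermitian) (hB : B.IsHermitian) :
    ∑ p, twistXi A B p ^ 2 = ∑ p, crossXi A B p ^ 2 := by
  have hsign (q q' : PIdx n) : ∑ p, (pauliSign p q : ℝ) * pauliSign p q'
      = if q = q' then dim n ^ 2 else 0 := by
    have h4 : dim n ^ 2 = 4 ^ n := by rw [dim, ← pow_mul, mul_comm, pow_mul]; norm_num
    rw [h4]
    exact_mod_cast sum_pauliSign_mul q q'
  simp only [twistXi_eq_sum hA hB, mul_pow, ← Finset.mul_sum,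
    sum_sq_sum_mul_of_orthogonal _ _ hsign]
  field_simp [dim]

lemma sum_twistXi_mul_crossXi_le {A B : Op n} (hA : A.IsHermitian) (hB : B.IsHermitian) :
    ∑ p, twistXi A B p * crossXi A B p ≤ ∑ p, crossXi A B p ^ 2 := by
  have hCS := Finset.sum_mul_sq_le_sq_mul_sq Finset.univ (twistXi A B) (crossXi A B)
  rw [sum_sq_twistXi hA hB, ← sq] at hCS
  exact abs_le_of_sq_le_sq' hCS (by positivity) |>.2

lemma XiC_zero (A : Op n) : XiC A 0 = A.trace.re := by
  simp [XiC, pauliOp_zero]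

lemma XiC_sub_smul_one (A : Op n) (p : PIdx n) :
    XiC (A - (dim n : ℂ)⁻¹ • 1) p = XiC A p - if p = 0 then 1 else 0 := by
  simp only [XiC, Matrix.sub_mul, Matrix.smul_mul, Matrix.one_mul, trace_sub, trace_smul,
    trace_pauliOp, smul_eq_mul, Complex.sub_re]
  split_ifs <;> simp [dim_pos.ne']

lemma twistXi_sub_smul_one (ρ A : Op n) (c : ℂ) (p : PIdx n) :
    twistXi ρ (A - c • 1) p = twistXi ρ A p - (c * ρ.trace).re := by
  have h : ρ * pauliOp n p * (c • 1) * pauliOp n p = c • ρ := by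
    rw [Matrix.mul_smul, Matrix.mul_one, Matrix.smul_mul, Matrix.mul_assoc, pauliOp_mul_self,
      Matrix.mul_one]
  rw [twistXi, twistXi, Matrix.mul_sub, Matrix.sub_mul, h, trace_sub, trace_smul, Complex.sub_re,
    smul_eq_mul]

lemma crossXi_sub_smul_one {ρ : Op n} (hρ₁ : ρ.trace = 1) (A : Op n) (p : PIdx n) :
    crossXi ρ (A - (dim n : ℂ)⁻¹ • 1) p = crossXi ρ A p - if p = 0 then 1 else 0 := by
  rw [crossXi, crossXi, XiC_sub_smul_one]
  split_ifs with hp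
  · simp [hp, XiC_zero, hρ₁]
  · ring

lemma sum_sq_crossXi_sub_smul_one {ρ A : Op n} (hρ₁ : ρ.trace = 1) (hA : A.trace = 1) :
    ∑ p, crossXi ρ (A - (dim n : ℂ)⁻¹ • 1) p ^ 2 = ∑ p, crossXi ρ A p ^ 2 - 1 := by
  have h0 : crossXi ρ A 0 = 1 := by simp [crossXi, XiC_zero, hρ₁, hA]
  have hexp (p : PIdx n) : (crossXi ρ A p - if p = 0 then 1 else 0) ^ 2
      = crossXi ρ A p ^ 2 - if p = 0 then 2 * crossXi ρ A p - 1 else 0 := by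
    split_ifs <;> ring
  simp only [crossXi_sub_smul_one hρ₁, hexp, Finset.sum_sub_distrib, Finset.sum_ite_eq',
    Finset.mem_univ, if_true, h0]
  ring

lemma sum_twistXi_mul_crossXi_sub_smul_one {ρ A : Op n} (hρ : ρ.IsHermitian)
    (hρ₁ : ρ.trace = 1) (hA : A.IsHermitian) :
    ∑ p, twistXi ρ (A - (dim n : ℂ)⁻¹ • 1) p * crossXi ρ (A - (dim n : ℂ)⁻¹ • 1) p
      = ∑ p, twistXi ρ A p * crossXi ρ A p - 2 * ((ρ * A).trace).re + 1 / dim n := by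
  have ht0 : twistXi ρ A 0 = ((ρ * A).trace).re := by simp [twistXi, pauliOp_zero]
  have hexp (p : PIdx n) :
      (twistXi ρ A p - (dim n)⁻¹) * (crossXi ρ A p - if p = 0 then 1 else 0)
        = twistXi ρ A p * crossXi ρ A p - (dim n)⁻¹ * crossXi ρ A p
          - if p = 0 then twistXi ρ A p - (dim n)⁻¹ else 0 := by
    split_ifs <;> ring
  simp only [crossXi_sub_smul_one hρ₁, twistXi_sub_smul_one, hρ₁, mul_one]
  simp only [← Complex.ofReal_inv, Complex.ofReal_re, hexp, Finset.sum_sub_distrib,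
    ← Finset.mul_sum, sum_crossXi hρ hA, Finset.sum_ite_eq', Finset.mem_univ, if_true, ht0]
  field_simp [dim_pos.ne']
  ring

lemma sq_XiC_le_one {ρ : Op n} (hρ : IsDensity ρ) (p : PIdx n) : XiC ρ p ^ 2 ≤ 1 := by
  have h := hρ.1.abs_re_trace_mul_le (isHermitian_pauliOp p) (pauliOp_mul_self p)
  rw [hρ.2] at h
  exact sq_le_one_iff_abs_le_one _ |>.mpr (by simpa [XiC] using h)

lemma sum_sq_XiC_le {ρ : Op n} (hρ : IsDensity ρ) : ∑ p, XiC ρ p ^ 2 ≤ dim n := by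
  have h := hρ.1.re_trace_mul_self_le
  rw [hρ.2] at h
  have hsum : ∑ p, XiC ρ p ^ 2 = dim n * ((ρ * ρ).trace).re := by
    simpa only [crossXi, sq] using sum_crossXi hρ.1.1 hρ.1.1
  rw [hsum]
  exact mul_le_of_le_one_right dim_pos.le (by simpa using h)

lemma sum_le_topdSum (g : PIdx n → ℝ) {S : Finset (PIdx n)} (hS : S.card = 2 ^ n) :
    ∑ p ∈ S, g p ≤ topdSum g :=
  le_csSup ((Set.finite_range fun T : Finset (PIdx n) => ∑ p ∈ T, g p).subset
    (by rintro _ ⟨T, -, rfl⟩; exact ⟨T, rfl⟩)).bddAbove ⟨S, hS, rfl⟩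

lemma isHermitian_ketbra (φ : Idx n → ℂ) : (ketbra φ).IsHermitian := by
  simp [IsHermitian, ketbra]

lemma trace_ketbra_mul (φ : Idx n → ℂ) (M : Op n) :
    (ketbra φ * M).trace = star φ ⬝ᵥ M *ᵥ φ := by
  rw [ketbra, vecMulVec_mul, trace_vecMulVec, dotProduct_comm, dotProduct_mulVec]

lemma XiC_ketbra (φ : Idx n → ℂ) (p : PIdx n) : XiC (ketbra φ) p = pExp φ p := by
  rw [XiC, trace_ketbra_mul, pExp]

lemma sum_sq_crossXi_ketbra_le_topdSum {ρ : Op n} (hρ : IsDensity ρ) (φ : Idx n → ℂ) :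
    ∑ p, crossXi ρ (ketbra φ) p ^ 2 ≤ topdSum fun p => pExp φ p ^ 2 := by
  have hcard : 2 ^ n ≤ Fintype.card (PIdx n) := by
    simpa using Nat.pow_le_pow_left (show 2 ≤ 4 by norm_num) n
  obtain ⟨S, hS, hle⟩ := exists_card_eq_sum_mul_le_sum (w := fun p => XiC ρ p ^ 2)
    (g := fun p => pExp φ p ^ 2) (by positivity) hcard (fun _ => sq_nonneg _)
    (sq_XiC_le_one hρ) (by simpa [dim] using sum_sq_XiC_le hρ) (fun _ => sq_nonneg _)
  calc ∑ p, crossXi ρ (ketbra φ) p ^ 2 = ∑ p, XiC ρ p ^ 2 * pExp φ p ^ 2 := by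
        simp only [crossXi, XiC_ketbra, mul_pow]
    _ ≤ topdSum fun p => pExp φ p ^ 2 := hle.trans (sum_le_topdSum _ hS)

lemma ketbra_mul_mul_ketbra (φ : Idx n → ℂ) (M : Op n) :
    ketbra φ * M * ketbra φ = (ketbra φ * M).trace • ketbra φ := by
  rw [ketbra, vecMulVec_mul, vecMulVec_mul_vecMulVec, vecMulVec_smul, trace_vecMulVec,
    dotProduct_comm φ]

lemma twistXi_ketbra_self (φ : Idx n → ℂ) (p : PIdx n) :
    twistXi (ketbra φ) (ketbra φ) p = crossXi (ketbra φ) (ketbra φ) p := by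
  rw [twistXi, ketbra_mul_mul_ketbra, Matrix.smul_mul, trace_smul, smul_eq_mul,
    ← ofReal_XiC (isHermitian_ketbra φ), ← Complex.ofReal_mul, Complex.ofReal_re, crossXi]

lemma sum_sq_crossXi_ketbra_self {φ : Idx n → ℂ} (hφ : star φ ⬝ᵥ φ = 1) :
    ∑ p, crossXi (ketbra φ) (ketbra φ) p ^ 2 = (2 : ℝ) ^ (-(M2 φ)) * dim n := by
  have h4 : ∑ p, crossXi (ketbra φ) (ketbra φ) p ^ 2 = ∑ p, pExp φ p ^ 4 :=
    Finset.sum_congr rfl fun p _ => by rw [crossXi, XiC_ketbra]; ring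
  have hpos : 0 < (dim n)⁻¹ * ∑ p, pExp φ p ^ 4 := by
    have h0 : pExp φ 0 = 1 := by simp [pExp, pauliOp_zero, hφ]
    have := Finset.single_le_sum (fun p _ => by positivity) (Finset.mem_univ (0 : PIdx n))
      (f := fun p => pExp φ p ^ 4)
    exact mul_pos (inv_pos.mpr dim_pos) (by simp only [h0] at this; linarith)
  rw [M2, neg_neg, Real.rpow_logb two_pos (by norm_num) hpos, h4,
    inv_mul_eq_div, div_mul_cancel₀ _ dim_pos.ne']

end ThriftyShadow

/-- cross characteristic functions for fidelity estimation. -/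
theorem cross_char_fidelity (n : ℕ) (ρ : Op n) (hρ : IsDensity ρ)
    (φ : Idx n → ℂ) (hφ : star φ ⬝ᵥ φ = 1)
    (O : Op n) (hO : O = ketbra φ - ((dim n : ℂ))⁻¹ • (1 : Op n)) :
    (∑ p : PIdx n, twistXi ρ O p * crossXi ρ O p
        = (∑ p : PIdx n, twistXi ρ (ketbra φ) p * crossXi ρ (ketbra φ) p)
            - 2 * fid ρ φ + 1 / dim n)
    ∧ (∑ p : PIdx n, twistXi ρ O p * crossXi ρ O p ≤ ∑ p : PIdx n, (crossXi ρ O p) ^ 2)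
    ∧ (∑ p : PIdx n, (crossXi ρ O p) ^ 2
        = (∑ p : PIdx n, (crossXi ρ (ketbra φ) p) ^ 2) - 1)
    ∧ (∑ p : PIdx n, (crossXi ρ O p) ^ 2 < topdSum (fun p => (pExp φ p) ^ 2))
    ∧ (∑ p : PIdx n, twistXi (ketbra φ) (ketbra φ) p * crossXi (ketbra φ) (ketbra φ) p
        = ∑ p : PIdx n, (crossXi (ketbra φ) (ketbra φ) p) ^ 2)
    ∧ (∑ p : PIdx n, (crossXi (ketbra φ) (ketbra φ) p) ^ 2
        = (2 : ℝ) ^ (-(M2 φ)) * dim n) := by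
  have hK := isHermitian_ketbra φ
  have htrK : (ketbra φ).trace = 1 := by
    rw [ketbra, trace_vecMulVec, dotProduct_comm, hφ]
  have hfid : ((ρ * ketbra φ).trace).re = fid ρ φ := by
    rw [trace_mul_comm, trace_ketbra_mul, fid]
  have hO' : O.IsHermitian := hO ▸ hK.sub (isHermitian_one.smul (by simp [IsSelfAdjoint]))
  have hnorm := sum_sq_crossXi_sub_smul_one hρ.2 htrK
  subst hO
  refine ⟨?_, sum_twistXi_mul_crossXi_le hρ.1.1 hO', hnorm, ?_, ?_,
    sum_sq_crossXi_ketbra_self hφ⟩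
  · rw [sum_twistXi_mul_crossXi_sub_smul_one hρ.1.1 hρ.2 hK, hfid]
  · rw [hnorm]
    linarith [sum_sq_crossXi_ketbra_le_topdSum hρ φ]
  · simp only [twistXi_ketbra_self, sq]
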